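/- arXiv:1602.03590 — 4 statements merged into one kernel-verified Lean document; each statement's English description precedes it below -/
import Mathlib

section
/- If a connected finite simple graph G on n vertices admits a real skew-symmetric matrix A with n distinct eigenvalues whose off-diagonal support is exactly the edge set of G, then the matching number of G equals ⌊n/2⌋. -/
open Matrix

noncomputable def matchNum {V : Type*} [Fintype V] (G : SimpleGraph V) : ℕ :=
  sSup {k | ∃ M : G.Subgraph, M.IsMatching ∧ M.edgeSet.ncard = k}

/-!
Distinct eigenvalues make `0` at most a simple root of the characteristic polynomial, so the
skew-symmetric matrix `A` has nullity at most one. Hence some principal submatrix `A[S]` with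
`|S| ≥ n - 1` is invertible: `S` is everything if `A` is invertible, and otherwise `S` omits one
vertex at which a kernel vector does not vanish.

An invertible skew-symmetric matrix `M` admits a fixed-point-free involution `σ` with
`M v (σ v) ≠ 0` for all `v`. Indeed, `(M M⁻¹) v v = 1` gives a `w` with `M v w ≠ 0 ≠ M⁻¹ w v`;
the `2 × 2` block of `M⁻¹` on `{v, w}` is then invertible, which forces the principal submatrix
of `M` off `{v, w}` to be invertible, and we induct. The orbits of `σ` on `S` are the edges of a
matching of `G` covering `S`, and such a matching has `⌊n/2⌋` edges.
-/

namespace Matrix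

def principalSubmatrix {V α : Type*} (M : Matrix V V α) (S : Finset V) : Matrix S S α :=
  M.submatrix (↑) (↑)

@[simp]
lemma principalSubmatrix_apply {V α : Type*} (M : Matrix V V α) (S : Finset V) (i j : S) :
    M.principalSubmatrix S i j = M i j :=
  rfl

lemma apply_eq_neg_of_transpose_eq_neg {V α : Type*} [Neg α] {M : Matrix V V α}
    (hM : Mᵀ = -M) (i j : V) : M j i = -M i j :=
  congrFun₂ hM i j

lemma transpose_principalSubmatrix_eq_neg {V α : Type*} [Neg α] {M : Matrix V V α}
    (hM : Mᵀ = -M) (S : Finset V) :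
    (M.principalSubmatrix S)ᵀ = -M.principalSubmatrix S := by
  ext i j
  exact apply_eq_neg_of_transpose_eq_neg hM i j

lemma apply_self_eq_zero_of_transpose_eq_neg {V K : Type*} [Field K] [NeZero (2 : K)]
    {M : Matrix V V K} (hM : Mᵀ = -M) (v : V) : M v v = 0 := by
  have h : (2 : K) * M v v = 0 := by
    linear_combination apply_eq_neg_of_transpose_eq_neg hM v v
  exact (mul_eq_zero.mp h).resolve_left two_ne_zero

variable {V K : Type*} [Fintype V] [DecidableEq V] [Field K]

lemma transpose_inv_eq_neg {M : Matrix V V K} (hM : Mᵀ = -M) (hdet : IsUnit M.det) :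
    M⁻¹ᵀ = -M⁻¹ := by
  rw [transpose_nonsing_inv, hM]
  exact inv_eq_left_inv (by rw [neg_mul_neg, nonsing_inv_mul M hdet])

lemma exists_ne_zero_mulVec_eq_zero_on_of_det_principalSubmatrix_eq_zero {M : Matrix V V K}
    {S : Finset V} (h : (M.principalSubmatrix S).det = 0) :
    ∃ y : V → K, y ≠ 0 ∧ (∀ v ∉ S, y v = 0) ∧ ∀ v ∈ S, (M *ᵥ y) v = 0 := by
  obtain ⟨x, hx0, hx⟩ := exists_mulVec_eq_zero_iff.mpr h
  refine ⟨fun v => if hv : v ∈ S then x ⟨v, hv⟩ else 0, fun hy => hx0 ?_,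
    fun v hv => dif_neg hv, fun v hv => ?_⟩
  · funext s
    simpa using congrFun hy s
  · have hxv := congrFun hx ⟨v, hv⟩
    rw [Pi.zero_apply] at hxv
    refine Eq.trans ?_ hxv
    rw [mulVec, dotProduct,
      ← Finset.sum_subset (Finset.subset_univ S) fun j _ hj => by simp [hj],
      ← Finset.sum_coe_sort]
    simp [principalSubmatrix, mulVec, dotProduct]

lemma exists_apply_ne_zero_det_principalSubmatrix_compl_pair_ne_zero [NeZero (2 : K)]
    {M : Matrix V V K} (hM : Mᵀ = -M) (hdet : M.det ≠ 0) (v : V) :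
    ∃ w, M v w ≠ 0 ∧ (M.principalSubmatrix {v, w}ᶜ).det ≠ 0 := by
  set N := M⁻¹
  have hN : Nᵀ = -N := transpose_inv_eq_neg hM (isUnit_iff_ne_zero.mpr hdet)
  obtain ⟨w, -, hw⟩ : ∃ w ∈ Finset.univ, M v w * N w v ≠ 0 := by
    refine Finset.exists_ne_zero_of_sum_ne_zero ?_
    rw [← mul_apply, mul_nonsing_inv M (isUnit_iff_ne_zero.mpr hdet), one_apply_eq]
    exact one_ne_zero
  obtain ⟨hMvw, hNwv⟩ := mul_ne_zero_iff.mp hw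
  have hvw : v ≠ w := by
    rintro rfl
    exact hMvw (apply_self_eq_zero_of_transpose_eq_neg hM v)
  refine ⟨w, hMvw, fun h => ?_⟩
  obtain ⟨y, hy0, hy, hMy⟩ :=
    exists_ne_zero_mulVec_eq_zero_on_of_det_principalSubmatrix_eq_zero h
  set z := M *ᵥ y
  have hyz : y = N *ᵥ z := by
    rw [mulVec_mulVec, nonsing_inv_mul M (isUnit_iff_ne_zero.mpr hdet), one_mulVec]
  have hz : ∀ u, u ≠ v ∧ u ≠ w → z u = 0 := fun u hu => hMy u (by simpa using hu)
  have hNz : ∀ u, y u = N u v * z v + N u w * z w := fun u => by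
    rw [hyz]
    exact Fintype.sum_eq_add v w hvw fun u' hu' => by rw [hz u' hu', mul_zero]
  -- `y` vanishes at `v` and `w`, and the block `!![0, N v w; N w v, 0]` of `N` is invertible.
  have hzw : z w = 0 := by
    have h := hNz v
    rw [hy v (by simp), apply_self_eq_zero_of_transpose_eq_neg hN, zero_mul, zero_add,
      apply_eq_neg_of_transpose_eq_neg hN] at h
    exact (mul_eq_zero.mp h.symm).resolve_left (neg_ne_zero.mpr hNwv)
  have hzv : z v = 0 := by
    have h := hNz w
    rw [hy w (by simp), hzw, mul_zero, add_zero] at h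
    exact (mul_eq_zero.mp h.symm).resolve_left hNwv
  have hz0 : z = 0 := funext fun u => by
    by_cases huv : u = v
    · rwa [huv]
    by_cases huw : u = w
    · rwa [huw]
    exact hz u ⟨huv, huw⟩
  exact hy0 (by rw [hyz, hz0, mulVec_zero])

lemma det_principalSubmatrix_compl_singleton_ne_zero {M : Matrix V V K} (hM : Mᵀ = -M)
    (hker : Module.finrank K (LinearMap.ker (toLin' M)) ≤ 1) {u : V → K} (hu : M *ᵥ u = 0)
    {v : V} (huv : u v ≠ 0) : (M.principalSubmatrix {v}ᶜ).det ≠ 0 := by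
  intro h
  obtain ⟨y, hy0, hy, hMy⟩ :=
    exists_ne_zero_mulVec_eq_zero_on_of_det_principalSubmatrix_eq_zero h
  set z := M *ᵥ y
  have hz : ∀ x, x ≠ v → z x = 0 := fun x hx => hMy x (by simpa using hx)
  have huz : u ⬝ᵥ z = 0 := by
    rw [dotProduct_mulVec, ← mulVec_transpose, hM, neg_mulVec, hu, neg_zero, zero_dotProduct]
  have hzv : z v = 0 := by
    rw [dotProduct, Fintype.sum_eq_single v fun x hx => by rw [hz x hx, mul_zero]] at huz
    exact (mul_eq_zero.mp huz).resolve_left huv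
  have hyker : y ∈ LinearMap.ker (toLin' M) := by
    rw [LinearMap.mem_ker, toLin'_apply]
    funext x
    by_cases hx : x = v
    · rwa [hx]
    · exact hz x hx
  have huker : u ∈ LinearMap.ker (toLin' M) := by rwa [LinearMap.mem_ker, toLin'_apply]
  have hu0 : (⟨u, huker⟩ : LinearMap.ker (toLin' M)) ≠ 0 := fun h0 =>
    huv (by simpa using congrFun (congrArg Subtype.val h0) v)
  obtain ⟨c, hc⟩ := exists_smul_eq_of_finrank_eq_one
    (hker.antisymm (Module.finrank_pos_iff_exists_ne_zero.mpr ⟨_, hu0⟩)) hu0 ⟨y, hyker⟩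
  have hy' : y = c • u := (congrArg Subtype.val hc).symm
  have hc0 : c = 0 := by
    have := hy v (by simp)
    rw [hy', Pi.smul_apply, smul_eq_mul] at this
    exact (mul_eq_zero.mp this).resolve_right huv
  exact hy0 (by rw [hy', hc0, zero_smul])

lemma finrank_ker_toLin'_le_one_of_nodup_roots_charpoly {M : Matrix V V K}
    (h : M.charpoly.roots.Nodup) : Module.finrank K (LinearMap.ker (toLin' M)) ≤ 1 := by
  classical
  calc Module.finrank K (LinearMap.ker (toLin' M))
      = Module.finrank K (Module.End.eigenspace (toLin' M) 0) := by
        rw [Module.End.eigenspace_zero]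
    _ ≤ (toLin' M).charpoly.rootMultiplicity 0 := LinearMap.finrank_eigenspace_le _ 0
    _ = M.charpoly.roots.count 0 := by rw [charpoly_toLin', Polynomial.count_roots]
    _ ≤ 1 := Multiset.nodup_iff_count_le_one.mp h 0

lemma exists_det_principalSubmatrix_ne_zero_of_finrank_ker_le_one {M : Matrix V V K}
    (hM : Mᵀ = -M) (hker : Module.finrank K (LinearMap.ker (toLin' M)) ≤ 1) :
    ∃ S : Finset V, Fintype.card V ≤ S.card + 1 ∧ (M.principalSubmatrix S).det ≠ 0 := by
  by_cases hdet : M.det = 0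
  · obtain ⟨u, hu0, hu⟩ := exists_mulVec_eq_zero_iff.mpr hdet
    obtain ⟨v, hv⟩ := Function.ne_iff.mp hu0
    refine ⟨{v}ᶜ, ?_, det_principalSubmatrix_compl_singleton_ne_zero hM hker hu hv⟩
    rw [Finset.card_compl, Finset.card_singleton]
    omega
  · exact ⟨Finset.univ, by simp,
      (det_submatrix_equiv_self (Equiv.subtypeUnivEquiv Finset.mem_univ) M).trans_ne hdet⟩

theorem exists_involutive_perm_apply_ne_zero [NeZero (2 : K)] {M : Matrix V V K}
    (hM : Mᵀ = -M) (hdet : M.det ≠ 0) :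
    ∃ σ : Equiv.Perm V, Function.Involutive σ ∧ ∀ v, M v (σ v) ≠ 0 := by
  induction hn : Fintype.card V using Nat.strong_induction_on generalizing V with
  | _ n ih =>
  rcases isEmpty_or_nonempty V with hV | hV
  · exact ⟨1, isEmptyElim, isEmptyElim⟩
  obtain ⟨v⟩ := hV
  obtain ⟨w, hvw, hdet'⟩ :=
    exists_apply_ne_zero_det_principalSubmatrix_compl_pair_ne_zero hM hdet v
  set T : Finset V := {v, w}ᶜ
  have hcard : Fintype.card T < n := by
    rw [← hn, Fintype.card_coe]
    exact Finset.card_lt_univ_of_notMem (x := v) (by simp [T])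
  obtain ⟨τ, hτ, hMτ⟩ := ih _ hcard (transpose_principalSubmatrix_eq_neg hM T) hdet' rfl
  let π : Equiv.Perm {x // x ∉ T} := Equiv.swap ⟨v, by simp [T]⟩ ⟨w, by simp [T]⟩
  refine ⟨τ.subtypeCongr π, fun x => ?_, fun x => ?_⟩
  · by_cases hx : x ∈ T
    · rw [Equiv.Perm.subtypeCongr.left_apply _ _ hx,
        Equiv.Perm.subtypeCongr.left_apply_subtype, hτ]
    · rw [Equiv.Perm.subtypeCongr.right_apply _ _ hx,
        Equiv.Perm.subtypeCongr.right_apply_subtype, Equiv.swap_apply_self]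
  · by_cases hx : x ∈ T
    · rw [Equiv.Perm.subtypeCongr.left_apply _ _ hx]
      exact hMτ ⟨x, hx⟩
    · rw [Equiv.Perm.subtypeCongr.right_apply _ _ hx]
      obtain rfl | rfl : x = v ∨ x = w := by simpa [T, or_iff_not_imp_left] using hx
      · rw [Equiv.swap_apply_left]
        exact hvw
      · rw [Equiv.swap_apply_right, apply_eq_neg_of_transpose_eq_neg hM]
        exact neg_ne_zero.mpr hvw

end Matrix

namespace SimpleGraph.Subgraph

variable {V : Type*} {G : SimpleGraph V}

lemma exists_isMatching_verts_eq_of_involutive {S : Set V} {σ : S → S}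
    (hσ : Function.Involutive σ) (hadj : ∀ x : S, G.Adj x (σ x)) :
    ∃ M : G.Subgraph, M.IsMatching ∧ M.verts = S := by
  refine ⟨{ verts := S
            Adj := fun a b => ∃ x : S, ↑x = a ∧ ↑(σ x) = b
            adj_sub := ?_
            edge_vert := ?_
            symm := ?_ }, ?_, rfl⟩
  · rintro _ _ ⟨x, rfl, rfl⟩
    exact hadj x
  · rintro _ _ ⟨x, rfl, rfl⟩
    exact x.2
  · constructor
    rintro _ _ ⟨x, rfl, rfl⟩
    exact ⟨σ x, rfl, by rw [hσ]⟩
  · intro a ha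
    refine ⟨σ ⟨a, ha⟩, ⟨⟨a, ha⟩, rfl, rfl⟩, ?_⟩
    rintro _ ⟨x, rfl, rfl⟩
    rfl

lemma IsMatching.ncard_verts_eq_two_mul [Finite V] {M : G.Subgraph} (h : M.IsMatching) :
    M.verts.ncard = 2 * M.edgeSet.ncard := by
  have := Fintype.ofFinite M.edgeSet
  have hfiber : ∀ e : M.edgeSet, Nat.card {x // h.toEdge x = e} = 2 := by
    rintro ⟨e, he⟩
    induction e using Sym2.ind with
    | _ a b =>
    change Nat.card (h.toEdge ⁻¹' {⟨s(a, b), he⟩}) = 2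
    rw [h.toEdge_preimage_singleton he, Nat.card_coe_set_eq, Set.ncard_pair]
    exact fun hab => he.ne (congrArg Subtype.val hab)
  rw [← Nat.card_coe_set_eq, ← Nat.card_congr (Equiv.sigmaFiberEquiv h.toEdge), Nat.card_sigma,
    Finset.sum_congr rfl fun e _ => hfiber e, Finset.sum_const, smul_eq_mul, Finset.card_univ,
    ← Nat.card_eq_fintype_card, Nat.card_coe_set_eq, mul_comm]

end SimpleGraph.Subgraph

lemma matchNum_eq_of_isMatching {V : Type*} [Fintype V] {G : SimpleGraph V} {M : G.Subgraph}
    (hM : M.IsMatching) (hcard : Fintype.card V ≤ M.verts.ncard + 1) :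
    matchNum G = Fintype.card V / 2 := by
  have hle : ∀ M' : G.Subgraph, M'.IsMatching → 2 * M'.edgeSet.ncard ≤ Fintype.card V :=
    fun M' hM' => by
      rw [← hM'.ncard_verts_eq_two_mul, ← Nat.card_eq_fintype_card]
      exact Set.ncard_le_card _
  refine IsGreatest.csSup_eq ⟨⟨M, hM, ?_⟩, ?_⟩
  · have := hle M hM
    rw [hM.ncard_verts_eq_two_mul] at hcard
    omega
  · rintro _ ⟨M', hM', rfl⟩
    have := hle M' hM'
    omega

theorem matchNum_of_distinct_eigenvalues_general {n : ℕ} (G : SimpleGraph (Fin n))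
    (A : Matrix (Fin n) (Fin n) ℝ) (hskew : Aᵀ = -A)
    (hsupp : ∀ i j : Fin n, i ≠ j → (A i j ≠ 0 ↔ G.Adj i j))
    (hdist : ((A.map Complex.ofReal).charpoly.roots).Nodup) :
    matchNum G = n / 2 := by
  set M := A.map Complex.ofReal
  have hM : Mᵀ = -M := by
    rw [← transpose_map, hskew]
    ext i j
    simp [M]
  obtain ⟨S, hS, hdet⟩ := exists_det_principalSubmatrix_ne_zero_of_finrank_ker_le_one hM
    (finrank_ker_toLin'_le_one_of_nodup_roots_charpoly hdist)
  obtain ⟨σ, hσ, hMσ⟩ :=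
    exists_involutive_perm_apply_ne_zero (transpose_principalSubmatrix_eq_neg hM S) hdet
  have hadj : ∀ x : S, G.Adj x (σ x) := fun x => by
    have hA : A x (σ x) ≠ 0 := by simpa [M] using hMσ x
    refine (hsupp _ _ fun hx => ?_).mp hA
    rw [← hx] at hA
    exact hA (apply_self_eq_zero_of_transpose_eq_neg hskew x)
  obtain ⟨Ms, hMs, hverts⟩ :=
    SimpleGraph.Subgraph.exists_isMatching_verts_eq_of_involutive hσ hadj
  simpa using matchNum_eq_of_isMatching hMs (by rwa [hverts, Set.ncard_coe_finset])

/-- If a connected graph `G` on `n` vertices admits a real skew-symmetric matrix with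
`n` distinct eigenvalues whose off-diagonal support is exactly the edge set of `G`,
then the matching number of `G` is `⌊n/2⌋`. -/
theorem matchNum_of_distinct_eigenvalues {n : ℕ} (G : SimpleGraph (Fin n))
    (hG : G.Connected) (A : Matrix (Fin n) (Fin n) ℝ) (hskew : Aᵀ = -A)
    (hsupp : ∀ i j : Fin n, i ≠ j → (A i j ≠ 0 ↔ G.Adj i j))
    (hdist : ((A.map Complex.ofReal).charpoly.roots).Nodup) :
    matchNum G = n / 2 :=
  matchNum_of_distinct_eigenvalues_general G A hskew hsupp hdist
end

section
/- Every matrix in S⁻(G) has rank at most 2·match(G); equivalently, every real skew-symmetric matrix whose graph is G has at most 2·match(G) nonzero eigenvalues. -/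
/-!
A skew-symmetric matrix of rank `r` has a nonsingular principal `r × r` submatrix, so it suffices
to show that the graph of a nonsingular skew-symmetric matrix `B` (characteristic `≠ 2`) has a
perfect matching. By Tutte's theorem it is enough to rule out a set `u` whose removal leaves more
than `|u|` odd components. Each odd component carries a skew-symmetric block of odd size, which is
singular, and a kernel vector `x` of that block supported on the component. Since no edge leaves
a component except into `u`, the vector `B x` is supported on `u`; having more such vectors than
`|u|`, a nontrivial combination of them vanishes, giving a nonzero kernel vector of `B`.

The number of nonzero roots of the characteristic polynomial is at most the rank, because the
algebraic multiplicity of the eigenvalue `0` is at least the nullity.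
-/

open Matrix

namespace Matrix

variable {n F : Type*} [Fintype n] [DecidableEq n] [Field F]

theorem mulVec_dite_eq {m : Type*} (B : Matrix m n F) (s : Finset n) (y : s → F) :
    (B *ᵥ fun j => if h : j ∈ s then y ⟨j, h⟩ else 0) = B.submatrix id (↑) *ᵥ y := by
  ext i
  rw [mulVec, dotProduct, ← Fintype.sum_subtype_add_sum_subtype (· ∈ s)]
  have hout : ∀ j : {j // j ∉ s}, B i j * (if h : (j : n) ∈ s then y ⟨j, h⟩ else 0) = 0 :=
    fun j => by simp [j.2]
  simp only [hout, Finset.sum_const_zero, add_zero, mulVec, dotProduct, submatrix_apply, id,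
    Finset.coe_mem, dif_pos]
  exact Finset.sum_congr (by ext; simp) fun _ _ => rfl

theorem det_eq_zero_of_transpose_eq_neg [NeZero (2 : F)] {B : Matrix n n F} (hskew : Bᵀ = -B)
    (hodd : Odd (Fintype.card n)) : B.det = 0 := by
  have h : B.det = -B.det := by
    conv_lhs => rw [← det_transpose, hskew, det_neg, hodd.neg_one_pow, neg_one_mul]
  have h2 : (2 : F) * B.det = 0 := by linear_combination h
  exact (mul_eq_zero.mp h2).resolve_left two_ne_zero

theorem exists_ne_zero_mulVec_eq_zero_on [NeZero (2 : F)] {B : Matrix n n F} (hskew : Bᵀ = -B)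
    {s : Set n} (hs : Odd s.ncard) :
    ∃ x ≠ 0, (∀ j ∉ s, x j = 0) ∧ ∀ i ∈ s, (B *ᵥ x) i = 0 := by
  obtain ⟨s, rfl⟩ := s.toFinite.exists_finset_coe
  have hsub : (B.submatrix (↑) (↑) : Matrix s s F)ᵀ = -B.submatrix (↑) (↑) := by
    rw [transpose_submatrix, hskew]
    rfl
  obtain ⟨y, hy0, hy⟩ := exists_mulVec_eq_zero_iff.mpr <| det_eq_zero_of_transpose_eq_neg hsub
    (by simpa using hs)
  refine ⟨fun j => if h : j ∈ s then y ⟨j, h⟩ else 0, ?_, fun j hj => dif_neg hj, fun i hi => ?_⟩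
  · obtain ⟨j, hj⟩ := Function.ne_iff.mp hy0
    exact Function.ne_iff.mpr ⟨j, by simpa using hj⟩
  · rw [mulVec_dite_eq]
    exact congrFun hy ⟨i, hi⟩

theorem exists_card_eq_rank_det_submatrix_ne_zero {B : Matrix n n F} (hskew : Bᵀ = -B) :
    ∃ s : Finset n, s.card = B.rank ∧ (B.submatrix ((↑) : s → n) (↑)).det ≠ 0 := by
  obtain ⟨b, -, -, hspan, hli⟩ := exists_linearIndepOn_extension (K := F) (v := B.col)
    (linearIndepOn_empty F _) (Set.empty_subset Set.univ)
  obtain ⟨s, rfl⟩ := (Set.toFinite b).exists_finset_coe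
  have hcols : Submodule.span F (Set.range B.col) = Submodule.span F (B.col '' s) :=
    le_antisymm (Submodule.span_le.mpr (by simpa using hspan))
      (Submodule.span_mono (Set.image_subset_range _ _))
  refine ⟨s, ?_, fun hdet => ?_⟩
  · rw [rank_eq_finrank_span_cols, hcols, Set.image_eq_range, finrank_span_eq_card hli]
    simp
  obtain ⟨y, hy0, hy⟩ := exists_mulVec_eq_zero_iff.mpr hdet
  let x : n → F := fun j => if h : j ∈ s then y ⟨j, h⟩ else 0
  have hx : B *ᵥ x = B.submatrix id (↑) *ᵥ y := mulVec_dite_eq B s y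
  have hvec : ∀ v, v ᵥ* B = -(B *ᵥ v) := fun v => by
    rw [← vecMul_transpose, hskew, vecMul_neg, neg_neg]
  -- `x ᵥ* B` vanishes on `s`, and the columns indexed by `s` span all columns
  have hxB : x ᵥ* B = 0 := by
    have hle : Submodule.span F (B.col '' s) ≤ LinearMap.ker (dotProductBilin F F x) := by
      refine Submodule.span_le.mpr ?_
      rintro _ ⟨i, hi, rfl⟩
      change (x ᵥ* B) i = 0
      rw [hvec, Pi.neg_apply, hx, neg_eq_zero]
      exact congrFun hy ⟨i, hi⟩
    exact funext fun k => hle (hcols ▸ Submodule.subset_span ⟨k, rfl⟩)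
  have hBx : B.submatrix id (↑) *ᵥ y = 0 := by rw [← hx, ← neg_eq_zero, ← hvec, hxB]
  refine hy0 (funext (Fintype.linearIndependent_iff.mp hli y ?_))
  rw [← hBx]
  ext i
  simp [mulVec, dotProduct, mul_comm]

theorem det_eq_zero_of_card_lt_of_mulVec_eq_zero_off {ι : Type*} [Fintype ι] {B : Matrix n n F}
    {u : Set n} {x : ι → n → F} (hx0 : ∀ c, x c ≠ 0)
    (hdisj : ∀ c c' j, x c j ≠ 0 → x c' j ≠ 0 → c = c')
    (hBx : ∀ c, ∀ i ∉ u, (B *ᵥ x c) i = 0) (hcard : u.ncard < Fintype.card ι) : B.det = 0 := by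
  classical
  have hdep : ¬ LinearIndependent F fun c (i : u) => (B *ᵥ x c) i := fun hli => by
    have hle := hli.fintype_card_le_finrank
    rw [Module.finrank_fintype_fun_eq_card, ← Nat.card_eq_fintype_card (α := u),
      Nat.card_coe_set_eq] at hle
    omega
  obtain ⟨g, hg, c₀, hc₀⟩ := Fintype.not_linearIndependent_iff.mp hdep
  refine exists_mulVec_eq_zero_iff.mp ⟨∑ c, g c • x c, ?_, ?_⟩
  · obtain ⟨j, hj⟩ := Function.ne_iff.mp (hx0 c₀)
    refine Function.ne_iff.mpr ⟨j, ?_⟩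
    rw [Finset.sum_apply, Finset.sum_eq_single c₀]
    · simpa [hc₀] using hj
    · intro c _ hc
      simp [not_not.mp (mt (hdisj c c₀ j · hj) hc)]
    · simp
  · ext i
    rw [mulVec_sum]
    by_cases hi : i ∈ u
    · simpa [mulVec_smul] using congrFun hg ⟨i, hi⟩
    · simp [mulVec_smul, hBx _ i hi]

theorem card_filter_roots_charpoly_ne_zero_le_rank [DecidableEq F] (A : Matrix n n F) :
    (A.charpoly.roots.filter (· ≠ 0)).card ≤ A.rank := by
  have hsplit : (A.charpoly.roots.filter (· = 0)).card + (A.charpoly.roots.filter (· ≠ 0)).card =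
      A.charpoly.roots.card := by
    rw [← Multiset.card_add, Multiset.filter_add_not]
  have hzero : (A.charpoly.roots.filter (· = 0)).card = A.charpoly.rootMultiplicity 0 := by
    rw [← Polynomial.count_roots, Multiset.count_eq_card_filter_eq]
    simp only [eq_comm]
  have hroots : A.charpoly.roots.card ≤ Fintype.card n :=
    (Polynomial.card_roots' _).trans (charpoly_natDegree_eq_dim A).le
  have hgeom : Module.finrank F (LinearMap.ker A.toLin') ≤ A.charpoly.rootMultiplicity 0 := by
    have := LinearMap.finrank_eigenspace_le A.toLin' 0
    rwa [Module.End.eigenspace_zero, charpoly_toLin'] at this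
  have hnullity := LinearMap.finrank_range_add_finrank_ker A.toLin'
  rw [Module.finrank_fintype_fun_eq_card] at hnullity
  have hrank : A.rank = Module.finrank F (LinearMap.range A.toLin') := rfl
  omega

end Matrix

namespace SimpleGraph

variable {V W : Type*} {G : SimpleGraph V}

theorem Subgraph.IsMatching.ncard_verts_eq [Finite V] {M : G.Subgraph} (hM : M.IsMatching) :
    M.verts.ncard = 2 * M.edgeSet.ncard := by
  classical
  have := Fintype.ofFinite V
  rw [isMatching_iff_forall_degree] at hM
  rw [← M.image_coe_edgeSet_coe,
    Set.ncard_image_of_injective _ (Sym2.map.injective Subtype.val_injective), ← coe_edgeFinset,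
    Set.ncard_coe_finset, ← M.coe.sum_degrees_eq_twice_card_edges]
  calc M.verts.ncard = ∑ _v : M.verts, 1 := by simp [← Nat.card_coe_set_eq]
    _ = _ := Finset.sum_congr rfl fun v _ => by
      rw [Subgraph.coe_degree]
      convert (hM v v.2).symm

theorem Subgraph.IsMatching.ncard_edgeSet_le_matchNum [Fintype V] {M : G.Subgraph}
    (hM : M.IsMatching) : M.edgeSet.ncard ≤ matchNum G := by
  refine le_csSup ⟨Nat.card (Sym2 V), ?_⟩ ⟨M, hM, rfl⟩
  rintro _ ⟨M', -, rfl⟩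
  exact Set.ncard_le_card _

theorem card_le_two_mul_matchNum_of_embedding [Fintype V] [Fintype W] {H : SimpleGraph W}
    (f : H ↪g G) {M : H.Subgraph} (hM : M.IsPerfectMatching) :
    Fintype.card W ≤ 2 * matchNum G := by
  have hf : Function.Injective f.toHom := f.injective
  have hM' : (M.map f.toHom).IsMatching := hM.1.map f.toHom hf
  calc Fintype.card W = (M.map f.toHom).verts.ncard := by
        rw [Subgraph.map_verts, hM.2.verts_eq_univ, Set.ncard_image_of_injective _ hf,
          Set.ncard_univ, Nat.card_eq_fintype_card]
    _ = 2 * (M.map f.toHom).edgeSet.ncard := hM'.ncard_verts_eq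
    _ ≤ 2 * matchNum G := Nat.mul_le_mul_left 2 hM'.ncard_edgeSet_le_matchNum

theorem exists_isPerfectMatching_of_det_ne_zero {F : Type*} [Fintype W] [DecidableEq W] [Field F]
    [NeZero (2 : F)] {H : SimpleGraph W} {B : Matrix W W F} (hskew : Bᵀ = -B)
    (hadj : ∀ i j, i ≠ j → B i j ≠ 0 → H.Adj i j) (hdet : B.det ≠ 0) :
    ∃ M : H.Subgraph, M.IsPerfectMatching := by
  classical
  refine tutte.mpr fun u hu => hdet ?_
  set K := ((⊤ : H.Subgraph).deleteVerts u).coe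
  let S : K.ConnectedComponent → Set W := fun c => Subtype.val '' c.supp
  have hS_disj : ∀ {c c' j}, j ∈ S c → j ∈ S c' → c = c' := by
    rintro c c' _ ⟨k, hk, rfl⟩ ⟨k', hk', hkk'⟩
    rw [← hk, ← hk', Subtype.val_injective hkk']
  have hS_closed : ∀ {c i j}, i ∉ u → j ∈ S c → B i j ≠ 0 → i ∈ S c := by
    rintro c i _ hi ⟨k, hk, rfl⟩ hij
    by_cases hik : i = k
    · exact ⟨k, hk, hik.symm⟩
    have hK : K.Adj ⟨i, by simp [hi]⟩ k := by
      simpa [K, hi, k.2.2] using hadj i k hik hij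
    exact ⟨_, (ConnectedComponent.connectedComponentMk_eq_of_adj hK).trans hk, rfl⟩
  have hS_odd : ∀ c ∈ K.oddComponents, Odd (S c).ncard := fun c hc => by
    rwa [Set.ncard_image_of_injective _ Subtype.val_injective]
  choose x hx0 hx_supp hx_ker using
    fun c : K.oddComponents => exists_ne_zero_mulVec_eq_zero_on hskew (hS_odd c c.2)
  have hx_mem : ∀ c j, x c j ≠ 0 → j ∈ S c := fun c j hj => by_contra (hj <| hx_supp c j ·)
  refine det_eq_zero_of_card_lt_of_mulVec_eq_zero_off (x := x) (u := u) hx0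
    (fun c c' j hc hc' => Subtype.ext (hS_disj (hx_mem c j hc) (hx_mem c' j hc'))) ?_ ?_
  · intro c i hi
    by_cases hic : i ∈ S c
    · exact hx_ker c i hic
    refine Finset.sum_eq_zero fun j _ => ?_
    by_cases hjc : j ∈ S c
    · simp [not_not.mp (mt (hS_closed hi hjc) hic)]
    · simp [hx_supp c j hjc]
  · rwa [← Nat.card_eq_fintype_card, Nat.card_coe_set_eq]

end SimpleGraph

theorem Matrix.rank_le_two_mul_matchNum {V F : Type*} [Fintype V] [DecidableEq V] [Field F]
    [NeZero (2 : F)] (G : SimpleGraph V) {B : Matrix V V F} (hskew : Bᵀ = -B)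
    (hadj : ∀ i j, i ≠ j → B i j ≠ 0 → G.Adj i j) : B.rank ≤ 2 * matchNum G := by
  obtain ⟨s, hs, hdet⟩ := exists_card_eq_rank_det_submatrix_ne_zero hskew
  let f : s ↪ V := Function.Embedding.subtype _
  have hskew_s : (B.submatrix f f)ᵀ = -B.submatrix f f := by
    rw [transpose_submatrix, hskew]
    rfl
  obtain ⟨M, hM⟩ := SimpleGraph.exists_isPerfectMatching_of_det_ne_zero (H := G.comap f) hskew_s
    (fun i j hij => hadj i j (f.injective.ne hij)) hdet
  rw [← hs, ← Fintype.card_coe]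
  exact SimpleGraph.card_le_two_mul_matchNum_of_embedding (SimpleGraph.Embedding.comap f G) hM

/-- Every real skew-symmetric matrix whose graph is `G` has rank at most
`2 · match(G)`; equivalently, it has at most `2 · match(G)` nonzero eigenvalues. -/
theorem skew_rank_le_two_mul_matchNum {V : Type*} [Fintype V] [DecidableEq V]
    (G : SimpleGraph V) (A : Matrix V V ℝ) (hskew : Aᵀ = -A)
    (hsupp : ∀ i j : V, i ≠ j → (A i j ≠ 0 ↔ G.Adj i j)) :
    A.rank ≤ 2 * matchNum G ∧
      (((A.map Complex.ofReal).charpoly.roots).filter (· ≠ 0)).card ≤ 2 * matchNum G := by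
  have hskewℂ : (A.map Complex.ofReal)ᵀ = -A.map Complex.ofReal := by
    rw [← transpose_map, hskew, Matrix.map_neg _ Complex.ofReal_neg]
  have hadjℂ : ∀ i j, i ≠ j → A.map Complex.ofReal i j ≠ 0 → G.Adj i j := fun i j hij h =>
    (hsupp i j hij).mp (by simpa using h)
  exact ⟨rank_le_two_mul_matchNum G hskew fun i j hij => (hsupp i j hij).mp,
    (card_filter_roots_charpoly_ne_zero_le_rank _).trans (rank_le_two_mul_matchNum G hskewℂ hadjℂ)⟩
end

section
/- A connected finite simple graph G on n vertices has matching number ⌊n/2⌋ if and only if G has a spanning tree T with matching number ⌊n/2⌋. -/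
open SimpleGraph Finset

namespace SimpleGraph.Subgraph

variable {V : Type*} {G : SimpleGraph V} {M : G.Subgraph}

lemma IsMatching.isAcyclic_spanningCoe (hM : M.IsMatching) : M.spanningCoe.IsAcyclic := by
  intro v c hc
  exact hc.snd_ne_penultimate <|
    hM.eq_of_adj_left (c.adj_snd hc.not_nil) (c.adj_penultimate hc.not_nil).symm

lemma IsMatching.two_mul_ncard_edgeSet_le [Fintype V] (hM : M.IsMatching) :
    2 * M.edgeSet.ncard ≤ Fintype.card V := by
  classical
  have hdeg (v : V) : M.spanningCoe.degree v ≤ 1 := by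
    refine card_le_one.2 fun a ha b hb => ?_
    rw [mem_neighborFinset] at ha hb
    exact hM.eq_of_adj_left ha hb
  calc 2 * M.edgeSet.ncard = 2 * #M.spanningCoe.edgeFinset := by
        rw [← edgeSet_spanningCoe, ← Set.ncard_coe_finset, coe_edgeFinset]
    _ = ∑ v, M.spanningCoe.degree v := (sum_degrees_eq_twice_card_edges _).symm
    _ ≤ ∑ _ : V, 1 := sum_le_sum fun v _ => hdeg v
    _ = Fintype.card V := by simp

end SimpleGraph.Subgraph

section matchNum

variable {V : Type*} [Fintype V] {G G' : SimpleGraph V}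

lemma matchNum_bddAbove (G : SimpleGraph V) :
    BddAbove {k | ∃ M : G.Subgraph, M.IsMatching ∧ M.edgeSet.ncard = k} := by
  refine ⟨Fintype.card V / 2, ?_⟩
  rintro k ⟨M, hM, rfl⟩
  have := hM.two_mul_ncard_edgeSet_le
  omega

lemma SimpleGraph.Subgraph.IsMatching.ncard_edgeSet_le_matchNum_s10 {M : G.Subgraph}
    (hM : M.IsMatching) (h : M.spanningCoe ≤ G') : M.edgeSet.ncard ≤ matchNum G' :=
  le_csSup (matchNum_bddAbove G')
    ⟨⟨M.verts, M.Adj, fun hvw => h hvw, M.edge_vert, M.symm⟩, hM, rfl⟩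

lemma exists_isMatching_ncard_edgeSet_eq_matchNum (G : SimpleGraph V) :
    ∃ M : G.Subgraph, M.IsMatching ∧ M.edgeSet.ncard = matchNum G := by
  refine Nat.sSup_mem ?_ (matchNum_bddAbove G)
  exact ⟨0, ⊥, by simp [Subgraph.IsMatching]⟩

lemma matchNum_le_card_div_two (G : SimpleGraph V) : matchNum G ≤ Fintype.card V / 2 := by
  obtain ⟨M, hM, hcard⟩ := exists_isMatching_ncard_edgeSet_eq_matchNum G
  have := hM.two_mul_ncard_edgeSet_le
  omega

lemma matchNum_mono (h : G ≤ G') : matchNum G ≤ matchNum G' := by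
  obtain ⟨M, hM, hcard⟩ := exists_isMatching_ncard_edgeSet_eq_matchNum G
  exact hcard ▸ hM.ncard_edgeSet_le_matchNum_s10 (M.spanningCoe_le.trans h)

end matchNum

/-- A connected graph on `n` vertices has matching number `⌊n/2⌋` iff it has a
spanning tree with matching number `⌊n/2⌋`. -/
theorem matchNum_full_iff_spanning_tree {V : Type*} [Fintype V] (G : SimpleGraph V)
    (hG : G.Connected) :
    matchNum G = Fintype.card V / 2 ↔
      ∃ T : SimpleGraph V, T ≤ G ∧ T.IsTree ∧ matchNum T = Fintype.card V / 2 := by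
  constructor
  · intro hfull
    obtain ⟨M, hM, hcard⟩ := exists_isMatching_ncard_edgeSet_eq_matchNum G
    obtain ⟨T, hMT, hTG, hT⟩ :=
      hG.exists_isTree_le_of_le_of_isAcyclic M.spanningCoe_le hM.isAcyclic_spanningCoe
    refine ⟨T, hTG, hT, le_antisymm (matchNum_le_card_div_two T) ?_⟩
    exact hfull ▸ hcard ▸ hM.ncard_edgeSet_le_matchNum_s10 hMT
  · rintro ⟨T, hTG, -, hT⟩
    exact le_antisymm (matchNum_le_card_div_two G) (hT ▸ matchNum_mono hTG)
end

section
/- Let T be a finite tree on n vertices with n even. If T has a perfect matching, then for every vertex v, the forest T - v has exactly one connected component with an odd number of vertices. -/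
/-!
Let `w` be the partner of `v` in a perfect matching `M`. A component of `G - v` that does not
contain `w` is closed under `M`-partners, so `M` restricts to a perfect matching of it and it
has an even number of vertices. Hence every odd component contains `w`, and there is at most
one. There is at least one because `G - v` has an odd number of vertices.
-/

namespace SimpleGraph.Subgraph

variable {V : Type*} {G : SimpleGraph V} {M : G.Subgraph}

lemma IsPerfectMatching.even_ncard_of_forall_adj_mem [Finite V] (hM : M.IsPerfectMatching)
    {S : Set V} (hS : ∀ x ∈ S, ∀ y, M.Adj x y → y ∈ S) : Even S.ncard := by
  have hmatch : (M.induce S).IsMatching := fun x hx ↦ by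
    obtain ⟨y, hxy, huniq⟩ := hM.1 (hM.2 x)
    exact ⟨y, ⟨hx, hS x hx y hxy, hxy⟩, fun z hz ↦ huniq z hz.2.2⟩
  have := Fintype.ofFinite (M.induce S).verts
  rw [show S = (M.induce S).verts from rfl, Set.ncard_eq_toFinset_card']
  exact hmatch.even_card

lemma IsPerfectMatching.even_natCard [Finite V] (hM : M.IsPerfectMatching) :
    Even (Nat.card V) := by
  simpa using hM.even_ncard_of_forall_adj_mem (S := Set.univ) (by simp)

lemma IsPerfectMatching.mem_supp_of_odd_natCard_supp [Finite V] (hM : M.IsPerfectMatching)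
    {v w : V} (hvw : M.Adj v w) {c : (G.induce {v}ᶜ).ConnectedComponent}
    (hc : Odd (Nat.card c.supp)) : ⟨w, hvw.ne.symm⟩ ∈ c.supp := by
  by_contra hwc
  refine Nat.not_even_iff_odd.2 hc ?_
  rw [Nat.card_coe_set_eq, ← Set.ncard_image_of_injective _ Subtype.val_injective]
  refine hM.even_ncard_of_forall_adj_mem ?_
  rintro _ ⟨x, hx, rfl⟩ y hxy
  have hyv : y ≠ v := by
    rintro rfl
    obtain rfl : (x : V) = w := hM.1.eq_of_adj_left hxy.symm hvw
    exact hwc hx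
  exact ⟨⟨y, hyv⟩, c.mem_supp_of_adj_mem_supp hx (M.adj_sub hxy), rfl⟩

theorem IsPerfectMatching.existsUnique_odd_natCard_supp_induce_compl_singleton [Finite V]
    (hM : M.IsPerfectMatching) (v : V) :
    ∃! c : (G.induce {v}ᶜ).ConnectedComponent, Odd (Nat.card c.supp) := by
  obtain ⟨w, hvw, -⟩ := hM.1 (hM.2 v)
  have hodd : Odd (Nat.card ({v}ᶜ : Set V)) := by
    rw [Nat.card_coe_set_eq, Set.ncard_compl, Set.ncard_singleton]
    have := Nonempty.intro v
    exact Nat.Even.sub_odd Nat.card_pos hM.even_natCard odd_one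
  obtain ⟨c, hc⟩ : (G.induce {v}ᶜ).oddComponents.Nonempty :=
    Set.nonempty_of_ncard_ne_zero ((odd_ncard_oddComponents _).2 hodd).pos.ne'
  replace hc : Odd (Nat.card c.supp) := by rwa [Nat.card_coe_set_eq]
  exact ⟨c, hc, fun c' hc' ↦
    ConnectedComponent.eq_of_common_vertex (hM.mem_supp_of_odd_natCard_supp hvw hc')
      (hM.mem_supp_of_odd_natCard_supp hvw hc)⟩

end SimpleGraph.Subgraph

theorem unique_odd_component_of_perfect_matching_general {V : Type*} [Fintype V]
    (T : SimpleGraph V)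
    (hM : ∃ M : T.Subgraph, M.IsPerfectMatching) :
    ∀ v : V, ∃! c : (T.induce {v}ᶜ).ConnectedComponent, Odd (Nat.card c.supp) := by
  obtain ⟨M, hM⟩ := hM
  exact hM.existsUnique_odd_natCard_supp_induce_compl_singleton

/-- If a tree `T` on an even number of vertices has a perfect matching, then for every
vertex `v`, the forest `T - v` has exactly one odd component. -/
theorem unique_odd_component_of_perfect_matching {V : Type*} [Fintype V]
    (T : SimpleGraph V) (hT : T.IsTree) (hn : Even (Fintype.card V))
    (hM : ∃ M : T.Subgraph, M.IsPerfectMatching) :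
    ∀ v : V, ∃! c : (T.induce {v}ᶜ).ConnectedComponent, Odd (Nat.card c.supp) :=
  unique_odd_component_of_perfect_matching_general T hM
end
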